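/- arXiv:1203.1771 — 4 statements merged into one kernel-verified Lean document; each statement's English description precedes it below -/
import Mathlib

section
/- For all φ in C_c^∞(ℝ^N, ℂ) with N ≥ 3, the Hardy inequality holds: ∫_{ℝ^N} |∇φ(x)|² dx ≥ ((N-2)/2)² ∫_{ℝ^N} |φ(x)|²/|x|² dx. -/
open MeasureTheory

open Filter Topology in
private lemma hardy_am_aux {c a b : ℝ} (hc : 0 < c) :
    2 * (a * b) ≤ c * a ^ 2 + c⁻¹ * b ^ 2 := by
  nlinarith [mul_nonneg (inv_nonneg.2 hc.le) (sq_nonneg (c * a - b)), mul_inv_cancel₀ hc.ne']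

open Filter Topology in
set_option maxHeartbeats 1000000 in
private lemma hardy_eps (N : ℕ) (hN : 3 ≤ N)
    (φ : EuclideanSpace ℝ (Fin N) → ℂ)
    (hsmooth : ContDiff ℝ (⊤ : ℕ∞) φ) (hsupp : HasCompactSupport φ) {ε : ℝ} (hε : 0 < ε) :
    (((N : ℝ) - 2) / 2) ^ 2 * ∫ x, ‖φ x‖ ^ 2 * ((‖x‖ ^ 2 + ε ^ 2))⁻¹
      ≤ ∫ x, ‖fderiv ℝ φ x‖ ^ 2 := by
  have hc : 0 < ((N : ℝ) - 2) / 2 := by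
    have : (3:ℝ) ≤ (N:ℝ) := by exact_mod_cast hN
    linarith
  set c : ℝ := ((N : ℝ) - 2) / 2 with hc_def
  set s : EuclideanSpace ℝ (Fin N) → ℝ := fun x => ‖x‖ ^ 2 + ε ^ 2 with hs_def
  have hs : ∀ x, 0 < s x := fun x => by positivity
  have hs_cont : Continuous s := (continuous_norm.pow 2).add continuous_const
  have hr_le_s : ∀ x, ‖x‖ ^ 2 ≤ s x := fun x => by
    simp only [hs_def]; nlinarith [sq_nonneg ε]
  set u : EuclideanSpace ℝ (Fin N) → ℝ := fun x => ‖φ x‖ ^ 2 with hu_def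
  have hu_cont : Continuous u := hsmooth.continuous.norm.pow 2
  have hu_nonneg : ∀ x, 0 ≤ u x := fun x => by positivity
  have huD : Differentiable ℝ u := (hsmooth.norm_sq (𝕜 := ℂ)).differentiable (by simp)
  have hφc : Continuous φ := hsmooth.continuous
  have hΦc : Continuous (fderiv ℝ φ) := hsmooth.continuous_fderiv (by simp)
  set K : Set (EuclideanSpace ℝ (Fin N)) := tsupport φ with hK_def
  have hK : IsCompact K := hsupp
  have hφ0 : ∀ x, x ∉ K → φ x = 0 := fun x hx => image_eq_zero_of_notMem_tsupport hx
  have hΦ0 : ∀ x, x ∉ K → fderiv ℝ φ x = 0 := by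
    intro x hx
    by_contra h
    exact hx (support_fderiv_subset ℝ (Function.mem_support.2 h))
  have intgr : ∀ f : EuclideanSpace ℝ (Fin N) → ℝ, Continuous f → (∀ x, x ∉ K → f x = 0) →
      Integrable f := fun f hf h0 =>
    hf.integrable_of_hasCompactSupport (HasCompactSupport.intro hK h0)
  -- derivatives
  have hud : ∀ x, HasFDerivAt u ((2:ℕ) • (innerSL ℝ (φ x)).comp (fderiv ℝ φ x)) x :=
    fun x => ((hsmooth.differentiable (by simp) x).hasFDerivAt).norm_sq
  have hfderiv_u : ∀ x w, fderiv ℝ u x w = 2 * (inner ℝ (φ x) (fderiv ℝ φ x w) : ℝ) := by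
    intro x w
    rw [(hud x).fderiv]
    simp [two_smul]; ring
  have hsd : ∀ x, HasFDerivAt s ((2:ℕ) • (innerSL ℝ x)) x :=
    fun x => ((hasStrictFDerivAt_norm_sq x).hasFDerivAt).add_const _
  set g : Fin N → EuclideanSpace ℝ (Fin N) → ℝ := fun i x => x i * (s x)⁻¹ with hg_def
  have hgd : ∀ (i : Fin N) x, HasFDerivAt (g i)
      (x i • (-((s x) ^ 2)⁻¹ • ((2:ℕ) • (innerSL ℝ x))) +
        (s x)⁻¹ • (EuclideanSpace.proj i : EuclideanSpace ℝ (Fin N) →L[ℝ] ℝ)) x := by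
    intro i x
    have h2 : HasFDerivAt (fun y => (s y)⁻¹)
        (-((s x) ^ 2)⁻¹ • ((2:ℕ) • (innerSL ℝ x))) x :=
      (hasDerivAt_inv (hs x).ne').comp_hasFDerivAt x (hsd x)
    exact ((EuclideanSpace.proj i : EuclideanSpace ℝ (Fin N) →L[ℝ] ℝ).hasFDerivAt).mul h2
  have hgD : ∀ i, Differentiable ℝ (g i) := fun i x => (hgd i x).differentiableAt
  have hg_cont : ∀ i, Continuous (g i) := fun i =>
    ((EuclideanSpace.proj i : EuclideanSpace ℝ (Fin N) →L[ℝ] ℝ).continuous).mul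
      (hs_cont.inv₀ fun x => (hs x).ne')
  set P : Fin N → EuclideanSpace ℝ (Fin N) → ℝ :=
    fun i x => (s x)⁻¹ - 2 * (x i) ^ 2 * ((s x) ^ 2)⁻¹ with hP_def
  have hP_cont : ∀ i, Continuous (P i) := by
    intro i
    apply Continuous.sub (hs_cont.inv₀ fun x => (hs x).ne')
    exact (continuous_const.mul
      (((EuclideanSpace.proj i : EuclideanSpace ℝ (Fin N) →L[ℝ] ℝ).continuous).pow 2)).mul
      ((hs_cont.pow 2).inv₀ fun x => (pow_pos (hs x) 2).ne')
  have hinner_single : ∀ (x : EuclideanSpace ℝ (Fin N)) i,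
      (inner ℝ x (EuclideanSpace.single i (1:ℝ)) : ℝ) = x i := by
    intro x i
    rw [real_inner_comm]
    simp [EuclideanSpace.inner_single_left]
  have hfderiv_g : ∀ i x, fderiv ℝ (g i) x (EuclideanSpace.single i (1:ℝ)) = P i x := by
    intro i x
    rw [(hgd i x).fderiv]
    simp only [ContinuousLinearMap.add_apply, ContinuousLinearMap.smul_apply,
      ContinuousLinearMap.coe_smul', Pi.smul_apply, innerSL_apply_apply, hinner_single,
      PiLp.proj_apply, EuclideanSpace.single_apply, if_pos rfl, hP_def]
    simp [smul_eq_mul, two_smul]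
    ring
  -- derivative-applied functions, continuity
  have hΦapp_cont : ∀ (w : EuclideanSpace ℝ (Fin N)),
      Continuous (fun x => fderiv ℝ φ x w) := fun w => hΦc.clm_apply continuous_const
  have hΦx_cont : Continuous (fun x => fderiv ℝ φ x x) := hΦc.clm_apply continuous_id
  set q : Fin N → EuclideanSpace ℝ (Fin N) → ℝ :=
    fun i x => (2 * (inner ℝ (φ x) (fderiv ℝ φ x (EuclideanSpace.single i 1)) : ℝ)) * g i x
    with hq_def
  have hq_int : ∀ i, Integrable (q i) := by
    intro i
    apply intgr
    · exact (continuous_const.mul (hφc.inner (hΦapp_cont _))).mul (hg_cont i)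
    · intro x hx
      simp [hq_def, hφ0 x hx]
  have huP_int : ∀ i, Integrable (fun x => u x * P i x) := by
    intro i
    apply intgr _ (hu_cont.mul (hP_cont i))
    intro x hx
    simp [hu_def, hφ0 x hx]
  have hug_int : ∀ i, Integrable (fun x => u x * g i x) := by
    intro i
    apply intgr _ (hu_cont.mul (hg_cont i))
    intro x hx
    simp [hu_def, hφ0 x hx]
  -- integration by parts per coordinate
  have lem : ∀ i : Fin N, ∫ x, u x * P i x = - ∫ x, q i x := by
    intro i
    have int1 : Integrable (fun x => fderiv ℝ u x (EuclideanSpace.single i 1) * g i x) := by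
      apply (hq_int i).congr
      apply ae_of_all
      intro x
      simp only [hq_def, hfderiv_u]
    have int2 : Integrable (fun x => u x * fderiv ℝ (g i) x (EuclideanSpace.single i 1)) := by
      apply (huP_int i).congr
      apply ae_of_all
      intro x
      simp only [hfderiv_g]
    have h0 := integral_mul_fderiv_eq_neg_fderiv_mul_of_integrable int1 int2 (hug_int i)
      (fun x _ => huD x) (fun x _ => hgD i x)
    simp only [hfderiv_g, hfderiv_u] at h0
    exact h0

  -- sums over coordinates
  have hxsum : ∀ x : EuclideanSpace ℝ (Fin N), ∑ i, x i • EuclideanSpace.single i (1:ℝ) = x := by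
    intro x
    have := (EuclideanSpace.basisFun (Fin N) ℝ).sum_repr x
    simpa [EuclideanSpace.basisFun_apply, EuclideanSpace.basisFun_repr] using this
  have hsq : ∀ x : EuclideanSpace ℝ (Fin N), ∑ i, (x i)^2 = ‖x‖^2 := by
    intro x
    rw [← real_inner_self_eq_norm_sq, PiLp.inner_apply]
    simp [sq]
  have hPsum : ∀ x, ∑ i, P i x = (N:ℝ) * (s x)⁻¹ - 2 * ‖x‖^2 * ((s x)^2)⁻¹ := by
    intro x
    simp only [hP_def]
    rw [Finset.sum_sub_distrib, Finset.sum_const, Finset.card_univ, Fintype.card_fin]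
    have : ∑ i : Fin N, 2 * (x i)^2 * ((s x)^2)⁻¹ = 2 * ‖x‖^2 * ((s x)^2)⁻¹ := by
      rw [← Finset.sum_mul, ← Finset.mul_sum, hsq x]
    rw [this, nsmul_eq_mul]
  have hqsum : ∀ x, ∑ i, q i x = (s x)⁻¹ * (2 * (inner ℝ (φ x) (fderiv ℝ φ x x) : ℝ)) := by
    intro x
    have h0 : fderiv ℝ φ x x = ∑ i, x i • fderiv ℝ φ x (EuclideanSpace.single i 1) := by
      have h0' : fderiv ℝ φ x x = fderiv ℝ φ x (∑ i, x i • EuclideanSpace.single i 1) := by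
        rw [hxsum x]
      rw [h0', map_sum]
      exact Finset.sum_congr rfl fun i _ => (fderiv ℝ φ x).map_smul _ _
    have h1 : (inner ℝ (φ x) (fderiv ℝ φ x x) : ℝ)
        = ∑ i, x i * (inner ℝ (φ x) (fderiv ℝ φ x (EuclideanSpace.single i 1)) : ℝ) := by
      rw [h0, inner_sum]
      exact Finset.sum_congr rfl fun i _ => real_inner_smul_right _ _ _
    rw [h1, Finset.mul_sum, Finset.mul_sum]
    refine Finset.sum_congr rfl fun i _ => ?_
    simp only [hq_def, hg_def]
    ring
  -- the key integral identity
  have hN_int : Integrable (fun x => u x * ((N:ℝ) * (s x)⁻¹ - 2 * ‖x‖^2 * ((s x)^2)⁻¹)) := by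
    apply intgr
    · exact hu_cont.mul ((continuous_const.mul (hs_cont.inv₀ fun x => (hs x).ne')).sub
        ((continuous_const.mul (continuous_norm.pow 2)).mul
          ((hs_cont.pow 2).inv₀ fun x => (pow_pos (hs x) 2).ne')))
    · intro x hx
      simp [hu_def, hφ0 x hx]
  have hδ_int : Integrable (fun x => (s x)⁻¹ * (2 * (inner ℝ (φ x) (fderiv ℝ φ x x) : ℝ))) := by
    apply intgr
    · exact (hs_cont.inv₀ fun x => (hs x).ne').mul
        (continuous_const.mul (hφc.inner hΦx_cont))
    · intro x hx
      simp [hφ0 x hx]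
  have key : ∫ x, u x * ((N:ℝ) * (s x)⁻¹ - 2 * ‖x‖^2 * ((s x)^2)⁻¹)
      = - ∫ x, (s x)⁻¹ * (2 * (inner ℝ (φ x) (fderiv ℝ φ x x) : ℝ)) := by
    have e1 : (fun x => u x * ((N:ℝ) * (s x)⁻¹ - 2 * ‖x‖^2 * ((s x)^2)⁻¹))
        = fun x => ∑ i, u x * P i x := by
      funext x
      rw [← Finset.mul_sum, hPsum x]
    have e2 : (fun x => (s x)⁻¹ * (2 * (inner ℝ (φ x) (fderiv ℝ φ x x) : ℝ)))
        = fun x => ∑ i, q i x := by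
      funext x
      rw [hqsum x]
    rw [e1, e2, integral_finset_sum _ (fun i _ => huP_int i),
      integral_finset_sum _ (fun i _ => hq_int i)]
    calc ∑ i, ∫ x, u x * P i x = ∑ i : Fin N, -∫ x, q i x :=
          Finset.sum_congr rfl (fun i _ => lem i)
      _ = - ∑ i : Fin N, ∫ x, q i x := by rw [Finset.sum_neg_distrib]
  -- integrability of main players
  have hI_int : Integrable (fun x => ‖fderiv ℝ φ x‖^2) := by
    apply intgr _ (hΦc.norm.pow 2)
    intro x hx
    show ‖fderiv ℝ φ x‖ ^ 2 = 0
    rw [hΦ0 x hx]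
    simp
  have hA_int : Integrable (fun x => u x * (s x)⁻¹) :=
    intgr _ (hu_cont.mul (hs_cont.inv₀ fun x => (hs x).ne'))
      (fun x hx => by simp [hu_def, hφ0 x hx])
  have hB_int : Integrable (fun x => u x * ‖x‖^2 * ((s x)^2)⁻¹) :=
    intgr _ ((hu_cont.mul (continuous_norm.pow 2)).mul
        ((hs_cont.pow 2).inv₀ fun x => (pow_pos (hs x) 2).ne'))
      (fun x hx => by simp [hu_def, hφ0 x hx])
  -- pointwise fact : 2 r² (s²)⁻¹ ≤ 2 s⁻¹
  have hkey0 : ∀ x : EuclideanSpace ℝ (Fin N), ‖x‖^2 * ((s x)^2)⁻¹ ≤ (s x)⁻¹ := by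
    intro x
    have hsx := hs x
    have e : (s x) * (s x)⁻¹ = 1 := mul_inv_cancel₀ hsx.ne'
    have e2 : (s x)^2 * ((s x)^2)⁻¹ = 1 := mul_inv_cancel₀ (pow_pos hsx 2).ne'
    have ht : (0:ℝ) ≤ ((s x)^2)⁻¹ := by positivity
    nlinarith [hr_le_s x, mul_le_mul_of_nonneg_right (hr_le_s x) ht, inv_pos.2 hsx]
  -- step 1
  have step1 : ((N:ℝ) - 2) * ∫ x, u x * (s x)⁻¹
      ≤ ∫ x, u x * ((N:ℝ) * (s x)⁻¹ - 2 * ‖x‖^2 * ((s x)^2)⁻¹) := by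
    rw [← integral_const_mul]
    apply integral_mono (hA_int.const_mul _) hN_int
    intro x
    have h3 := mul_le_mul_of_nonneg_left (hkey0 x) (hu_nonneg x)
    simp only
    nlinarith [h3]
  -- step 2
  have cs_bound : ∀ x : EuclideanSpace ℝ (Fin N),
      |2 * (inner ℝ (φ x) (fderiv ℝ φ x x) : ℝ)| ≤ 2 * ‖φ x‖ * ‖fderiv ℝ φ x‖ * ‖x‖ := by
    intro x
    rw [abs_mul]
    have h := abs_real_inner_le_norm (φ x) (fderiv ℝ φ x x)
    have h2 : ‖fderiv ℝ φ x x‖ ≤ ‖fderiv ℝ φ x‖ * ‖x‖ := (fderiv ℝ φ x).le_opNorm x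
    have h3 : |(2:ℝ)| = 2 := by norm_num
    rw [h3]
    nlinarith [norm_nonneg (φ x), norm_nonneg x, norm_nonneg (fderiv ℝ φ x),
      norm_nonneg (fderiv ℝ φ x x)]
  have step2 : - ∫ x, (s x)⁻¹ * (2 * (inner ℝ (φ x) (fderiv ℝ φ x x) : ℝ))
      ≤ c * (∫ x, u x * ‖x‖^2 * ((s x)^2)⁻¹) + c⁻¹ * ∫ x, ‖fderiv ℝ φ x‖^2 := by
    rw [← integral_const_mul, ← integral_const_mul, ← integral_neg,
      ← integral_add ((hB_int.const_mul c)) ((hI_int.const_mul c⁻¹))]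
    apply integral_mono hδ_int.neg ((hB_int.const_mul c).add (hI_int.const_mul c⁻¹))
    intro x
    simp only [Pi.neg_apply, Pi.add_apply]
    have hsx := hs x
    have hinv : (0:ℝ) ≤ (s x)⁻¹ := by positivity
    have habs : -(2 * (inner ℝ (φ x) (fderiv ℝ φ x x) : ℝ))
        ≤ 2 * ‖φ x‖ * ‖fderiv ℝ φ x‖ * ‖x‖ := (neg_le_abs _).trans (cs_bound x)
    have h1 : -((s x)⁻¹ * (2 * (inner ℝ (φ x) (fderiv ℝ φ x x) : ℝ)))
        ≤ (s x)⁻¹ * (2 * ‖φ x‖ * ‖fderiv ℝ φ x‖ * ‖x‖) := by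
      rw [← mul_neg]
      exact mul_le_mul_of_nonneg_left habs hinv
    have ha2 : (‖φ x‖ * ‖x‖ * (s x)⁻¹)^2 = u x * ‖x‖^2 * ((s x)^2)⁻¹ := by
      simp only [hu_def]
      rw [mul_pow, mul_pow, inv_pow]
    have am : 2 * ((‖φ x‖ * ‖x‖ * (s x)⁻¹) * ‖fderiv ℝ φ x‖)
        ≤ c * ((‖φ x‖ * ‖x‖ * (s x)⁻¹)^2) + c⁻¹ * ‖fderiv ℝ φ x‖^2 := hardy_am_aux hc
    rw [ha2] at am
    calc -((s x)⁻¹ * (2 * (inner ℝ (φ x) (fderiv ℝ φ x x) : ℝ)))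
        ≤ (s x)⁻¹ * (2 * ‖φ x‖ * ‖fderiv ℝ φ x‖ * ‖x‖) := h1
      _ = 2 * ((‖φ x‖ * ‖x‖ * (s x)⁻¹) * ‖fderiv ℝ φ x‖) := by ring
      _ ≤ c * (u x * ‖x‖^2 * ((s x)^2)⁻¹) + c⁻¹ * ‖fderiv ℝ φ x‖^2 := am
  -- step 3
  have step3 : ∫ x, u x * ‖x‖^2 * ((s x)^2)⁻¹ ≤ ∫ x, u x * (s x)⁻¹ := by
    apply integral_mono hB_int hA_int
    intro x
    have h3 := mul_le_mul_of_nonneg_left (hkey0 x) (hu_nonneg x)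
    simp only
    nlinarith [h3]
  -- conclusion
  have hA_nonneg : 0 ≤ ∫ x, u x * (s x)⁻¹ := integral_nonneg fun x => by positivity
  have h2c : (N:ℝ) - 2 = 2 * c := by rw [hc_def]; ring
  have hchain : ((N:ℝ) - 2) * (∫ x, u x * (s x)⁻¹)
      ≤ c * (∫ x, u x * (s x)⁻¹) + c⁻¹ * ∫ x, ‖fderiv ℝ φ x‖^2 := by
    have h4 := mul_le_mul_of_nonneg_left step3 hc.le
    linarith [step1, key ▸ step2]
  have hcA : c * (∫ x, u x * (s x)⁻¹) ≤ c⁻¹ * ∫ x, ‖fderiv ℝ φ x‖^2 := by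
    rw [h2c] at hchain
    linarith
  have final : c^2 * ∫ x, u x * (s x)⁻¹ ≤ ∫ x, ‖fderiv ℝ φ x‖^2 := by
    have h5 := mul_le_mul_of_nonneg_left hcA hc.le
    have h6 : c * (c⁻¹ * ∫ x, ‖fderiv ℝ φ x‖^2) = ∫ x, ‖fderiv ℝ φ x‖^2 := by
      rw [← mul_assoc, mul_inv_cancel₀ hc.ne', one_mul]
    rw [h6] at h5
    calc c^2 * ∫ x, u x * (s x)⁻¹ = c * (c * ∫ x, u x * (s x)⁻¹) := by ring
      _ ≤ ∫ x, ‖fderiv ℝ φ x‖^2 := h5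
  exact final

open Filter Topology in
set_option maxHeartbeats 1000000 in
/-- **Hardy inequality**: for `N ≥ 3` and `φ ∈ C_c^∞(ℝ^N, ℂ)`,
`∫ |∇φ|² ≥ ((N-2)/2)² ∫ |φ|²/|x|²`. -/
theorem hardy_inequality (N : ℕ) (hN : 3 ≤ N)
    (φ : EuclideanSpace ℝ (Fin N) → ℂ)
    (hsmooth : ContDiff ℝ (⊤ : ℕ∞) φ) (hsupp : HasCompactSupport φ) :
    (((N : ℝ) - 2) / 2) ^ 2 * ∫ x, ‖φ x‖ ^ 2 / ‖x‖ ^ 2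
      ≤ ∫ x, ‖fderiv ℝ φ x‖ ^ 2 := by
  have hc : 0 < (((N : ℝ) - 2) / 2) ^ 2 := by
    have h3 : (3:ℝ) ≤ (N:ℝ) := by exact_mod_cast hN
    have : (0:ℝ) < ((N:ℝ) - 2) / 2 := by linarith
    positivity
  set c2 : ℝ := (((N : ℝ) - 2) / 2) ^ 2 with hc2_def
  have hI_nonneg : 0 ≤ ∫ x, ‖fderiv ℝ φ x‖ ^ 2 :=
    integral_nonneg fun x => by positivity
  -- nontriviality / no atoms
  haveI : Nontrivial (EuclideanSpace ℝ (Fin N)) := by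
    refine ⟨⟨EuclideanSpace.single ⟨0, by omega⟩ (1:ℝ), 0, ?_⟩⟩
    intro h
    have := congrArg (fun v : EuclideanSpace ℝ (Fin N) => v ⟨0, by omega⟩) h
    simp [EuclideanSpace.single_apply] at this
  -- ε_n
  set ε : ℕ → ℝ := fun n => ((n:ℝ)+1)⁻¹ with hε_def
  have hεpos : ∀ n, 0 < ε n := fun n => by positivity
  -- compact support basics
  have hK : IsCompact (tsupport φ) := hsupp
  have hφ0 : ∀ x, x ∉ tsupport φ → φ x = 0 := fun x hx => image_eq_zero_of_notMem_tsupport hx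
  have hscont : ∀ n, Continuous (fun x : EuclideanSpace ℝ (Fin N) => ‖x‖^2 + (ε n)^2) :=
    fun n => (continuous_norm.pow 2).add continuous_const
  have hspos : ∀ n (x : EuclideanSpace ℝ (Fin N)), 0 < ‖x‖^2 + (ε n)^2 :=
    fun n x => by have := hεpos n; positivity
  have hint : ∀ n : ℕ, Integrable
      (fun x : EuclideanSpace ℝ (Fin N) => ‖φ x‖^2 * ((‖x‖^2 + (ε n)^2))⁻¹) := by
    intro n
    apply Continuous.integrable_of_hasCompactSupport
    · exact (hsmooth.continuous.norm.pow 2).mul ((hscont n).inv₀ fun x => (hspos n x).ne')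
    · apply HasCompactSupport.intro hK
      intro x hx
      simp [hφ0 x hx]
  have heps : ∀ n : ℕ, ∫ x, ‖φ x‖^2 * ((‖x‖^2 + (ε n)^2))⁻¹
      ≤ (∫ x, ‖fderiv ℝ φ x‖ ^ 2) / c2 := by
    intro n
    rw [le_div_iff₀ hc]
    rw [mul_comm]
    exact hardy_eps N hN φ hsmooth hsupp (hεpos n)
  -- lintegral versions
  set f : ℕ → EuclideanSpace ℝ (Fin N) → ENNReal :=
    fun n x => ENNReal.ofReal (‖φ x‖^2 * ((‖x‖^2 + (ε n)^2))⁻¹) with hf_def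
  set F : EuclideanSpace ℝ (Fin N) → ENNReal :=
    fun x => ENNReal.ofReal (‖φ x‖^2 * (‖x‖^2)⁻¹) with hF_def
  have hmeas : ∀ n, AEMeasurable (f n) (volume : Measure (EuclideanSpace ℝ (Fin N))) := by
    intro n
    exact (ENNReal.continuous_ofReal.comp
      ((hsmooth.continuous.norm.pow 2).mul
        ((hscont n).inv₀ fun x => (hspos n x).ne'))).measurable.aemeasurable
  have hmono : ∀ x : EuclideanSpace ℝ (Fin N), Monotone fun n => f n x := by
    intro x m n hmn
    apply ENNReal.ofReal_le_ofReal
    apply mul_le_mul_of_nonneg_left _ (by positivity : (0:ℝ) ≤ ‖φ x‖^2)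
    apply inv_anti₀ (hspos n x)
    have h1 : ε n ≤ ε m := by
      simp only [hε_def]
      apply inv_anti₀ (by positivity)
      have : (m:ℝ) ≤ (n:ℝ) := by exact_mod_cast hmn
      linarith
    have h2 : (ε n)^2 ≤ (ε m)^2 := pow_le_pow_left₀ (hεpos n).le h1 2
    linarith
  have hne : ∀ᵐ x : EuclideanSpace ℝ (Fin N), x ≠ 0 := by
    have h0 : (volume : Measure (EuclideanSpace ℝ (Fin N))) {(0 : EuclideanSpace ℝ (Fin N))} = 0 :=
      measure_singleton _
    rw [ae_iff]
    convert h0 using 2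
    ext x
    simp
  have htend : ∀ᵐ x : EuclideanSpace ℝ (Fin N), Tendsto (fun n => f n x) atTop (𝓝 (F x)) := by
    filter_upwards [hne] with x hx
    have hx2 : (0:ℝ) < ‖x‖^2 := by
      have : x ≠ 0 := hx
      have h := norm_pos_iff.2 this
      positivity
    have h1 : Tendsto (fun n : ℕ => ε n) atTop (𝓝 0) := by
      simp only [hε_def, ← one_div]
      exact tendsto_one_div_add_atTop_nhds_zero_nat
    have h2 : Tendsto (fun n : ℕ => ‖x‖^2 + (ε n)^2) atTop (𝓝 (‖x‖^2)) := by
      have := ((h1.pow 2).const_add (‖x‖^2))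
      simpa using this
    have h3 : Tendsto (fun n : ℕ => ‖φ x‖^2 * ((‖x‖^2 + (ε n)^2))⁻¹) atTop
        (𝓝 (‖φ x‖^2 * (‖x‖^2)⁻¹)) :=
      tendsto_const_nhds.mul (h2.inv₀ hx2.ne')
    exact (ENNReal.continuous_ofReal.tendsto _).comp h3
  have hbound : ∀ n, ∫⁻ x, f n x ≤ ENNReal.ofReal ((∫ x, ‖fderiv ℝ φ x‖ ^ 2) / c2) := by
    intro n
    rw [hf_def]
    rw [← ofReal_integral_eq_lintegral_ofReal (hint n) (ae_of_all _ fun x => by positivity)]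
    exact ENNReal.ofReal_le_ofReal (heps n)
  have hlim : Tendsto (fun n => ∫⁻ x, f n x) atTop (𝓝 (∫⁻ x, F x)) :=
    lintegral_tendsto_of_tendsto_of_monotone hmeas (ae_of_all _ hmono) htend
  have hFle : ∫⁻ x, F x ≤ ENNReal.ofReal ((∫ x, ‖fderiv ℝ φ x‖ ^ 2) / c2) :=
    le_of_tendsto hlim (Eventually.of_forall hbound)
  have hmeasF : AEStronglyMeasurable (fun x : EuclideanSpace ℝ (Fin N) => ‖φ x‖^2 * (‖x‖^2)⁻¹)
      volume :=
    ((hsmooth.continuous.norm.pow 2).measurable.mul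
      ((continuous_norm.pow 2).measurable.inv)).aestronglyMeasurable
  have hval : ∫ x, ‖φ x‖^2 * (‖x‖^2)⁻¹ ≤ (∫ x, ‖fderiv ℝ φ x‖ ^ 2) / c2 := by
    rw [integral_eq_lintegral_of_nonneg_ae (ae_of_all _ fun x => by positivity) hmeasF]
    exact ENNReal.toReal_le_of_le_ofReal (div_nonneg hI_nonneg hc.le) hFle
  have hfinal : c2 * ∫ x, ‖φ x‖^2 * (‖x‖^2)⁻¹ ≤ ∫ x, ‖fderiv ℝ φ x‖ ^ 2 := by
    rw [mul_comm]
    exact (le_div_iff₀ hc).1 hval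
  simpa [div_eq_mul_inv] using hfinal
end

section
/- The generalized Laguerre polynomials satisfy the orthogonality relation ∫_0^∞ x^α e^{−x} L_n^α(x) L_m^α(x) dx = (Γ(n+α+1)/n!) δ_{n,m} for all integers n, m ≥ 0 and real α > −1. -/
/-!
Expanding both polynomials in monomials and integrating termwise against the Gamma integral
`∫₀^∞ x^α e^{-x} x^k dx = Γ(α+k+1)` turns the left side into sums of Gamma values. For fixed `j`,
`Γ(α+i+j+1) = Γ(α+i+1) · (α+1+i)(α+2+i)⋯(α+j+i)`, and the factor `Γ(α+i+1)` cancels against the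
binomial coefficient in the coefficient of `x^i` in `L_n^α`, leaving
`Γ(n+α+1)/n! · ∑ᵢ (-1)^i C(n,i) P_j(i)` with `P_j` a monic polynomial of degree `j`. This is,
up to sign, the `n`-th forward difference of `P_j`: it vanishes for `j < n` and equals `(-1)^n n!`
for `j = n`. Hence `L_n^α` is orthogonal to all monomials of degree `< n`, and the diagonal value
comes from the leading coefficient `(-1)^n/n!` of `L_n^α`.
-/

open MeasureTheory Real

/-- The generalized binomial coefficient `binom(x, k) = Γ(x+1)/(Γ(k+1) Γ(x-k+1))`. -/
noncomputable def genBinom (x : ℝ) (k : ℕ) : ℝ :=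
  Real.Gamma (x + 1) / (Real.Gamma (k + 1) * Real.Gamma (x - k + 1))

/-- The generalized Laguerre polynomial
`L_m^α(t) = Σ_{n=0}^m (-1)^n binom(m+α, m-n) t^n/n!`. -/
noncomputable def laguerreL (α : ℝ) (m : ℕ) (t : ℝ) : ℝ :=
  ∑ n ∈ Finset.range (m + 1),
    (-1) ^ n * genBinom ((m : ℝ) + α) (m - n) * t ^ n / (Nat.factorial n)

open Finset Polynomial Nat fwdDiff

section AlternatingSum

variable {R : Type*} [CommRing R]

theorem sum_range_neg_one_pow_mul_choose_mul_eval (P : R[X]) (n : ℕ) :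
    ∑ i ∈ range (n + 1), (-1) ^ i * (n.choose i : R) * P.eval (i : R)
      = (-1) ^ n * (Δ_[1])^[n] P.eval 0 := by
  rw [fwdDiff_iter_eq_sum_shift, mul_sum]
  refine sum_congr rfl fun i hi => ?_
  obtain ⟨k, rfl⟩ := Nat.exists_eq_add_of_le (Nat.lt_succ_iff.mp (mem_range.mp hi))
  have hsq : ((-1 : R) ^ k) ^ 2 = 1 := by rw [← pow_mul, pow_mul', neg_one_sq, one_pow]
  rw [Nat.add_sub_cancel_left, zero_add, nsmul_one, zsmul_eq_mul]
  push_cast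
  linear_combination -(-1 : R) ^ i * ((i + k).choose i : R) * P.eval (i : R) * hsq

theorem sum_range_neg_one_pow_mul_choose_mul_eval_of_natDegree_lt {P : R[X]} {n : ℕ}
    (hP : P.natDegree < n) :
    ∑ i ∈ range (n + 1), (-1) ^ i * (n.choose i : R) * P.eval (i : R) = 0 := by
  rw [sum_range_neg_one_pow_mul_choose_mul_eval, fwdDiff_iter_eq_zero_of_degree_lt hP,
    Pi.zero_apply, mul_zero]

theorem sum_range_neg_one_pow_mul_choose_mul_eval_of_monic {P : R[X]} (hP : P.Monic) :
    ∑ i ∈ range (P.natDegree + 1), (-1) ^ i * (P.natDegree.choose i : R) * P.eval (i : R)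
      = (-1) ^ P.natDegree * P.natDegree ! := by
  rw [sum_range_neg_one_pow_mul_choose_mul_eval, fwdDiff_iter_degree_eq_factorial, hP.leadingCoeff,
    one_smul]
  rfl

end AlternatingSum

theorem Real.Gamma_add_nat_eq_mul_eval_ascPochhammer {s : ℝ} (hs : 0 < s) (j : ℕ) :
    Gamma (s + j) = Gamma s * (ascPochhammer ℝ j).eval s := by
  induction j with
  | zero => simp
  | succ j ih =>
    rw [Nat.cast_succ, ← add_assoc, Gamma_add_one (by positivity), ih, ascPochhammer_succ_eval]
    ring

theorem genBinom_zero {x : ℝ} (hx : Gamma (x + 1) ≠ 0) : genBinom x 0 = 1 := by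
  simp [genBinom, hx]

theorem genBinom_nat_add_sub {n i : ℕ} (hi : i ≤ n) (α : ℝ) :
    genBinom (n + α) (n - i) = Gamma (n + α + 1) / ((n - i)! * Gamma (α + i + 1)) := by
  rw [genBinom, Nat.cast_sub hi, ← Nat.cast_sub hi, Gamma_nat_eq_factorial, Nat.cast_sub hi]
  congr 3
  ring

noncomputable def laguerreCoeff (α : ℝ) (m n : ℕ) : ℝ :=
  (-1) ^ n * genBinom (m + α) (m - n) / n !

theorem laguerreL_eq_sum (α : ℝ) (m : ℕ) (t : ℝ) :
    laguerreL α m t = ∑ n ∈ range (m + 1), laguerreCoeff α m n * t ^ n :=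
  sum_congr rfl fun n _ => by rw [laguerreCoeff]; ring

theorem laguerreCoeff_self {α : ℝ} (hα : -1 < α) (m : ℕ) :
    laguerreCoeff α m m = (-1) ^ m / m ! := by
  have hΓ : Gamma (m + α + 1) ≠ 0 :=
    (Gamma_pos_of_pos (by linarith [m.cast_nonneg (α := ℝ)])).ne'
  rw [laguerreCoeff, Nat.sub_self, genBinom_zero hΓ, mul_one]

theorem laguerreCoeff_mul_Gamma_add {α : ℝ} (hα : -1 < α) {n i : ℕ} (hi : i ≤ n) (j : ℕ) :
    laguerreCoeff α n i * Gamma (α + ↑(i + j) + 1)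
      = Gamma (n + α + 1) / n ! *
          ((-1) ^ i * n.choose i * ((ascPochhammer ℝ j).comp (X + C (α + 1))).eval (i : ℝ)) := by
  have hs : 0 < α + i + 1 := by linarith [i.cast_nonneg (α := ℝ)]
  have hΓ : Gamma (α + i + 1) ≠ 0 := (Gamma_pos_of_pos hs).ne'
  have hGamma :
      Gamma (α + ↑(i + j) + 1) = Gamma (α + i + 1) * (ascPochhammer ℝ j).eval (α + i + 1) := by
    rw [← Gamma_add_nat_eq_mul_eval_ascPochhammer hs]
    push_cast
    ring_nf
  rw [laguerreCoeff, genBinom_nat_add_sub hi, hGamma, Nat.cast_choose ℝ hi, eval_comp, eval_add,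
    eval_X, eval_C, show (i : ℝ) + (α + 1) = α + i + 1 by ring]
  field_simp

theorem sum_laguerreCoeff_mul_Gamma_add {α : ℝ} (hα : -1 < α) {n j : ℕ} (hj : j ≤ n) :
    ∑ i ∈ range (n + 1), laguerreCoeff α n i * Gamma (α + ↑(i + j) + 1)
      = if j = n then (-1) ^ n * Gamma (n + α + 1) else 0 := by
  set P : ℝ[X] := (ascPochhammer ℝ j).comp (X + C (α + 1))
  have hPdeg : P.natDegree = j := by
    rw [natDegree_comp, ascPochhammer_natDegree, natDegree_X_add_C, mul_one]
  have hPmonic : P.Monic :=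
    (monic_ascPochhammer ℝ j).comp (monic_X_add_C _) (by rw [natDegree_X_add_C]; exact one_ne_zero)
  rw [sum_congr rfl fun i hi =>
    laguerreCoeff_mul_Gamma_add hα (Nat.lt_succ_iff.mp (mem_range.mp hi)) j, ← mul_sum]
  split_ifs with h
  · subst h
    have hsum := sum_range_neg_one_pow_mul_choose_mul_eval_of_monic hPmonic
    rw [hPdeg] at hsum
    rw [hsum]
    field_simp
  · rw [sum_range_neg_one_pow_mul_choose_mul_eval_of_natDegree_lt
      (hPdeg.trans_lt (lt_of_le_of_ne hj h)), mul_zero]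

theorem rpow_mul_exp_neg_mul_pow_eqOn (α : ℝ) (k : ℕ) :
    Set.EqOn (fun x : ℝ => x ^ α * exp (-x) * x ^ k)
      (fun x => exp (-x) * x ^ (α + k + 1 - 1)) (Set.Ioi 0) := fun x (hx : 0 < x) => by
  dsimp only
  rw [add_sub_cancel_right, rpow_add hx, rpow_natCast]
  ring

theorem integrableOn_rpow_mul_exp_neg_mul_pow {α : ℝ} (hα : -1 < α) (k : ℕ) :
    IntegrableOn (fun x : ℝ => x ^ α * exp (-x) * x ^ k) (Set.Ioi 0) :=
  (GammaIntegral_convergent (by linarith [k.cast_nonneg (α := ℝ)])).congr_fun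
    (rpow_mul_exp_neg_mul_pow_eqOn α k).symm measurableSet_Ioi

theorem integral_rpow_mul_exp_neg_mul_pow {α : ℝ} (hα : -1 < α) (k : ℕ) :
    ∫ x in Set.Ioi 0, x ^ α * exp (-x) * x ^ k = Gamma (α + k + 1) := by
  rw [Gamma_eq_integral (by linarith [k.cast_nonneg (α := ℝ)])]
  exact setIntegral_congr_fun measurableSet_Ioi (rpow_mul_exp_neg_mul_pow_eqOn α k)

theorem integral_rpow_mul_exp_neg_mul_sum {α : ℝ} (hα : -1 < α) {ι : Type*} (s : Finset ι)
    (a : ι → ℝ) (e : ι → ℕ) :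
    ∫ x in Set.Ioi 0, x ^ α * exp (-x) * ∑ k ∈ s, a k * x ^ e k
      = ∑ k ∈ s, a k * Gamma (α + e k + 1) := by
  simp_rw [mul_sum, mul_left_comm _ (a _)]
  rw [integral_finsetSum _ fun k _ => (integrableOn_rpow_mul_exp_neg_mul_pow hα (e k)).const_mul _]
  simp_rw [integral_const_mul, integral_rpow_mul_exp_neg_mul_pow hα]

theorem laguerreL_mul_laguerreL (α : ℝ) (n m : ℕ) (x : ℝ) :
    laguerreL α n x * laguerreL α m x
      = ∑ p ∈ range (n + 1) ×ˢ range (m + 1),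
          laguerreCoeff α n p.1 * laguerreCoeff α m p.2 * x ^ (p.1 + p.2) := by
  rw [laguerreL_eq_sum, laguerreL_eq_sum, sum_mul_sum, sum_product]
  exact sum_congr rfl fun i _ => sum_congr rfl fun j _ => by ring

theorem integral_laguerreL_mul_laguerreL_of_le {α : ℝ} (hα : -1 < α) {n m : ℕ} (hmn : m ≤ n) :
    ∫ x in Set.Ioi (0 : ℝ), x ^ α * exp (-x) * laguerreL α n x * laguerreL α m x
      = Gamma (n + α + 1) / n ! * if n = m then 1 else 0 := by
  simp_rw [mul_assoc _ (laguerreL α n _), laguerreL_mul_laguerreL,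
    integral_rpow_mul_exp_neg_mul_sum hα, sum_product_right, mul_assoc (laguerreCoeff α n _),
    mul_left_comm (laguerreCoeff α n _), ← mul_sum]
  rw [sum_congr rfl fun j hj => congrArg _
    (sum_laguerreCoeff_mul_Gamma_add hα ((Nat.lt_succ_iff.mp (mem_range.mp hj)).trans hmn))]
  simp only [mul_ite, mul_zero, sum_ite_eq', mem_range, Nat.lt_succ_iff, hmn.ge_iff_eq']
  split_ifs with h
  · subst h
    rw [laguerreCoeff_self hα]
    field_simp
    rw [← pow_mul, pow_mul', neg_one_sq, one_pow, one_mul]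
  · rfl

/-- **Orthogonality of generalized Laguerre polynomials**: for `α > -1` and
`n, m ≥ 0`, `∫_0^∞ x^α e^{-x} L_n^α(x) L_m^α(x) dx = (Γ(n+α+1)/n!) δ_{n,m}`. -/
theorem laguerre_orthogonality (α : ℝ) (hα : -1 < α) (n m : ℕ) :
    ∫ x in Set.Ioi (0 : ℝ),
        x ^ α * Real.exp (-x) * laguerreL α n x * laguerreL α m x
      = Real.Gamma ((n : ℝ) + α + 1) / (Nat.factorial n) *
          (if n = m then 1 else 0) := by
  wlog hmn : m ≤ n generalizing n m
  · have hne : n ≠ m := by omega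
    simp_rw [mul_right_comm _ (laguerreL α n _), this m n (by omega), if_neg hne.symm, if_neg hne,
      mul_zero]
  exact integral_laguerreL_mul_laguerreL_of_le hα hmn
end

section
/- Let N ≥ 2 and suppose (μ_k)_{k≥1} is a nondecreasing sequence of reals satisfying the Weyl-type lower bound μ_k ≥ c k^{2/(N-1)} for all k ≥ k₀ with c > 0. Define α_k = (N−2)/2 − √(((N−2)/2)² + μ_k) and suppose there exist C₂ > 0 and δ₂ ≥ 0 with sup-norm bounds ‖ψ_k‖_∞ ≤ C₂ k^{δ₂}. Then for every compact set 𝒦 ⊂ ℝ^N, the series Σ_{k>k₀} |j_{−α_k}(|x||y|)| |ψ_k(x/|x|)| |ψ_k(y/|y|)| converges uniformly for x, y ∈ 𝒦, where j_ν(r) = r^{−(N−2)/2} J_{ν+(N−2)/2}(r). -/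
open Real Filter

/-- The Bessel function of the first kind of (real) order `ν`. -/
noncomputable def besselJ (ν z : ℝ) : ℝ :=
  ∑' k : ℕ, (-1) ^ k / (Real.Gamma (k + 1) * Real.Gamma (k + ν + 1)) *
    (z / 2) ^ (2 * (k : ℝ) + ν)

/-- The modified spherical Bessel function `j_ν(r) = r^{-(N-2)/2} J_{ν+(N-2)/2}(r)`. -/
noncomputable def sphBesselJ (N : ℕ) (ν r : ℝ) : ℝ :=
  r ^ (-(((N : ℝ) - 2) / 2)) * besselJ (ν + ((N : ℝ) - 2) / 2) r

open Topology
open scoped Nat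

/-!
On `‖x‖‖y‖ ≤ M` the Gamma-function bound `|J_ν(t)| ≤ (t/2)^ν e^{t²/4} / Γ(ν+1)` bounds the
`k`-th term by `C₂² e^{M²/4} k^{2δ₂} M^{β_k} / Γ(β_k + 1)`, where
`β_k = -α_k + (N-2)/2 = √(((N-2)/2)² + μ_k) ≥ √c k^{1/(N-1)}` by the Weyl bound.
Since `M^β / Γ(β+1) = O(e^{-β})`, these majorants are `O(k^{2δ₂} e^{-√c k^{1/(N-1)}})`,
which is summable, and the Weierstrass M-test gives uniform convergence.
-/

lemma Gamma_add_one_le_Gamma_nat_add_add_one {ν : ℝ} (hν : 0 ≤ ν) (k : ℕ) :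
    Gamma (ν + 1) ≤ Gamma (k + ν + 1) := by
  induction k with
  | zero => simp
  | succ n ih =>
    have hpos : 0 < (n : ℝ) + ν + 1 := by positivity
    rw [Nat.cast_succ, show (n : ℝ) + 1 + ν + 1 = n + ν + 1 + 1 by ring, Gamma_add_one hpos.ne']
    nlinarith [Gamma_pos_of_pos hpos]

lemma abs_besselJ_le {ν z : ℝ} (hν : 0 ≤ ν) (hz : 0 ≤ z) :
    |besselJ ν z| ≤ (z / 2) ^ ν * exp ((z / 2) ^ 2) / Gamma (ν + 1) := by
  set w := z / 2
  have hw : 0 ≤ w := by positivity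
  have hterm : ∀ k : ℕ,
      ‖(-1) ^ k / (Gamma (k + 1) * Gamma (k + ν + 1)) * w ^ (2 * (k : ℝ) + ν)‖ ≤
        w ^ ν / Gamma (ν + 1) * ((w ^ 2) ^ k / k !) := by
    intro k
    have hpow : w ^ (2 * (k : ℝ) + ν) = (w ^ 2) ^ k * w ^ ν := by
      rw [rpow_add_of_nonneg hw (by positivity) hν, ← pow_mul,
        show 2 * (k : ℝ) = (2 * k : ℕ) by push_cast; ring, rpow_natCast]
    rw [norm_mul, norm_div, norm_pow, norm_neg, norm_one, one_pow, hpow, Gamma_nat_eq_factorial,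
      norm_of_nonneg (by positivity), norm_of_nonneg (by positivity)]
    calc 1 / (k ! * Gamma (k + ν + 1)) * ((w ^ 2) ^ k * w ^ ν)
        = (w ^ 2) ^ k * w ^ ν / (k ! * Gamma (k + ν + 1)) := by ring
      _ ≤ (w ^ 2) ^ k * w ^ ν / (k ! * Gamma (ν + 1)) := by
        gcongr; exact Gamma_add_one_le_Gamma_nat_add_add_one hν k
      _ = w ^ ν / Gamma (ν + 1) * ((w ^ 2) ^ k / k !) := by ring
  have hsum := (NormedSpace.expSeries_div_hasSum_exp (w ^ 2)).mul_left (w ^ ν / Gamma (ν + 1))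
  rw [← exp_eq_exp_ℝ] at hsum
  calc |besselJ ν z| ≤ w ^ ν / Gamma (ν + 1) * exp (w ^ 2) := tsum_of_norm_bounded hsum hterm
    _ = w ^ ν * exp (w ^ 2) / Gamma (ν + 1) := by ring

lemma abs_sphBesselJ_le {N : ℕ} (hN : 2 ≤ N) {β M r : ℝ} (hβ : ((N : ℝ) - 2) / 2 < β)
    (hr : 0 ≤ r) (hrM : r ≤ M) (hM : 1 ≤ M) :
    |sphBesselJ N (β - ((N : ℝ) - 2) / 2) r| ≤ M ^ β * exp ((M / 2) ^ 2) / Gamma (β + 1) := by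
  set a := ((N : ℝ) - 2) / 2
  have ha : 0 ≤ a := by
    have : (2 : ℝ) ≤ N := by exact_mod_cast hN
    simp only [a]; linarith
  have hβ0 : 0 ≤ β := ha.trans hβ.le
  have hpow : r ^ (-a) * (r / 2) ^ β ≤ M ^ β :=
    calc r ^ (-a) * (r / 2) ^ β ≤ r ^ (-a) * r ^ β := by gcongr; linarith
      -- `β ≠ a` is what lets `rpow_add'` merge the powers also at `r = 0`
      _ = r ^ (β - a) := by rw [← rpow_add' hr (by linarith)]; ring_nf
      _ ≤ M ^ (β - a) := rpow_le_rpow hr hrM (by linarith)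
      _ ≤ M ^ β := rpow_le_rpow_of_exponent_le hM (by linarith)
  unfold sphBesselJ
  rw [sub_add_cancel, abs_mul, abs_of_nonneg (rpow_nonneg hr _)]
  calc r ^ (-a) * |besselJ β r|
      ≤ r ^ (-a) * ((r / 2) ^ β * exp ((r / 2) ^ 2) / Gamma (β + 1)) := by
        gcongr; exact abs_besselJ_le hβ0 hr
    _ = r ^ (-a) * (r / 2) ^ β * exp ((r / 2) ^ 2) / Gamma (β + 1) := by ring
    _ ≤ M ^ β * exp ((M / 2) ^ 2) / Gamma (β + 1) := by gcongr

lemma rpow_div_Gamma_add_one_le {M β : ℝ} (hM : 1 ≤ M) (hβ : 1 ≤ β) :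
    M ^ β / Gamma (β + 1) ≤ M * exp (exp 1 * M + 1) * exp (-β) := by
  set n := ⌊β⌋₊
  have hn : (n : ℝ) ≤ β := Nat.floor_le (by linarith)
  have hn' : β < n + 1 := Nat.lt_floor_add_one β
  have hn1 : (1 : ℝ) ≤ n := by exact_mod_cast Nat.le_floor (by simpa using hβ)
  have hΓ : (n ! : ℝ) ≤ Gamma (β + 1) := by
    rw [← Gamma_nat_eq_factorial]
    exact Gamma_strictMonoOn_Ici.monotoneOn (Set.mem_Ici.2 (by linarith))
      (Set.mem_Ici.2 (by linarith)) (by linarith)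
  calc M ^ β / Gamma (β + 1) ≤ M ^ (n + 1) / n ! := by
        gcongr
        rw [← rpow_natCast]; push_cast
        exact rpow_le_rpow_of_exponent_le hM hn'.le
    _ = M * ((exp 1 * M) ^ n / n !) * exp (-n) := by
        rw [mul_pow, exp_one_pow, exp_neg]; field_simp; ring
    _ ≤ M * exp (exp 1 * M) * exp (1 - β) := by
        gcongr
        · exact pow_div_factorial_le_exp _ (by positivity) n
        · linarith
    _ = M * exp (exp 1 * M + 1) * exp (-β) := by
        rw [sub_eq_add_neg, exp_add, exp_add]; ring

lemma summable_rpow_mul_exp_neg_mul_rpow (s : ℝ) {a ε : ℝ} (ha : 0 < a) (hε : 0 < ε) :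
    Summable fun n : ℕ => (n : ℝ) ^ s * exp (-(a * (n : ℝ) ^ ε)) := by
  have hlim : Tendsto (fun n : ℕ => (n : ℝ) ^ (s + 2) * exp (-(a * (n : ℝ) ^ ε))) atTop (𝓝 0) := by
    refine ((tendsto_rpow_mul_exp_neg_mul_atTop_nhds_zero ((s + 2) / ε) a ha).comp
      ((tendsto_rpow_atTop hε).comp tendsto_natCast_atTop_atTop)).congr fun n => ?_
    simp only [Function.comp_apply, ← rpow_mul (Nat.cast_nonneg n), neg_mul]
    rw [mul_div_cancel₀ _ hε.ne']
  refine summable_of_isBigO_nat (summable_nat_rpow.2 (by norm_num : (-2 : ℝ) < -1)) ?_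
  refine ((hlim.isBigO_one ℝ).mul
    (Asymptotics.isBigO_refl (fun n : ℕ => (n : ℝ) ^ (-2 : ℝ)) atTop)).congr' ?_ (by simp)
  filter_upwards [eventually_gt_atTop 0] with n hn
  rw [mul_right_comm, ← rpow_add (by exact_mod_cast hn), add_neg_cancel_right]

lemma summable_rpow_mul_rpow_div_Gamma (s : ℝ) {M a ε : ℝ} (hM : 1 ≤ M) (ha : 0 < a)
    (hε : 0 < ε) {β : ℕ → ℝ} (hβ : ∀ᶠ n : ℕ in atTop, a * (n : ℝ) ^ ε ≤ β n) :
    Summable fun n : ℕ => (n : ℝ) ^ s * (M ^ β n / Gamma (β n + 1)) := by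
  have hβ_top : Tendsto β atTop atTop := tendsto_atTop_mono' _ hβ
    (((tendsto_rpow_atTop hε).comp tendsto_natCast_atTop_atTop).const_mul_atTop ha)
  refine summable_of_isBigO_nat (summable_rpow_mul_exp_neg_mul_rpow s ha hε)
    (Asymptotics.IsBigO.of_bound (M * exp (exp 1 * M + 1)) ?_)
  filter_upwards [hβ, hβ_top.eventually_ge_atTop 1] with n hn h1
  rw [norm_of_nonneg (by positivity), norm_of_nonneg (by positivity)]
  calc (n : ℝ) ^ s * (M ^ β n / Gamma (β n + 1))
      ≤ (n : ℝ) ^ s * (M * exp (exp 1 * M + 1) * exp (-β n)) := by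
        gcongr; exact rpow_div_Gamma_add_one_le hM h1
    _ ≤ (n : ℝ) ^ s * (M * exp (exp 1 * M + 1) * exp (-(a * (n : ℝ) ^ ε))) := by
        gcongr
    _ = M * exp (exp 1 * M + 1) * ((n : ℝ) ^ s * exp (-(a * (n : ℝ) ^ ε))) := by ring

lemma sqrt_mul_rpow_half_le_sqrt_sq_add {c x p μ : ℝ} (q : ℝ) (hc : 0 ≤ c) (hx : 0 ≤ x)
    (h : c * x ^ p ≤ μ) : √c * x ^ (p / 2) ≤ √(q ^ 2 + μ) := by
  calc √c * x ^ (p / 2) = √(c * x ^ p) := by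
        rw [sqrt_mul hc, sqrt_eq_rpow (x ^ p), ← rpow_mul hx]; ring_nf
    _ ≤ √(q ^ 2 + μ) := sqrt_le_sqrt (by nlinarith [sq_nonneg q])

lemma abs_sphBesselJ_mul_norm_mul_norm_le {N : ℕ} (hN : 2 ≤ N) {β M r C δ x : ℝ} {z w : ℂ}
    (hβ : ((N : ℝ) - 2) / 2 < β) (hr : 0 ≤ r) (hrM : r ≤ M) (hM : 1 ≤ M) (hx : 0 ≤ x)
    (hz : ‖z‖ ≤ C * x ^ δ) (hw : ‖w‖ ≤ C * x ^ δ) :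
    |sphBesselJ N (β - ((N : ℝ) - 2) / 2) r| * ‖z‖ * ‖w‖ ≤
      C ^ 2 * exp ((M / 2) ^ 2) * (x ^ (2 * δ) * (M ^ β / Gamma (β + 1))) := by
  have hbessel := abs_sphBesselJ_le hN hβ hr hrM hM
  have hB := (abs_nonneg _).trans hbessel
  calc _ ≤ M ^ β * exp ((M / 2) ^ 2) / Gamma (β + 1) * (C * x ^ δ) * (C * x ^ δ) :=
        mul_le_mul (mul_le_mul hbessel hz (norm_nonneg _) hB) hw (norm_nonneg _)
          (mul_nonneg hB ((norm_nonneg _).trans hz))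
    _ = C ^ 2 * exp ((M / 2) ^ 2) * (x ^ (2 * δ) * (M ^ β / Gamma (β + 1))) := by
        rw [mul_comm 2 δ, rpow_mul hx, rpow_two]; ring

theorem kernel_tail_uniform_convergence_general (N : ℕ) (hN : 2 ≤ N)
    (μ : ℕ → ℝ)
    (c : ℝ) (hc : 0 < c) (k₀ : ℕ)
    (hweyl : ∀ k, k₀ ≤ k → c * (k : ℝ) ^ ((2 : ℝ) / ((N : ℝ) - 1)) ≤ μ k)
    (ψ : ℕ → EuclideanSpace ℝ (Fin N) → ℂ)
    (C₂ δ₂ : ℝ)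
    (hψ : ∀ k θ, ‖ψ k θ‖ ≤ C₂ * (k : ℝ) ^ δ₂)
    (𝒦 : Set (EuclideanSpace ℝ (Fin N))) (h𝒦 : IsCompact 𝒦) :
    TendstoUniformlyOn
      (fun (n : ℕ) (p : EuclideanSpace ℝ (Fin N) × EuclideanSpace ℝ (Fin N)) =>
        ∑ k ∈ Finset.range n,
          |sphBesselJ N (-(((N : ℝ) - 2) / 2 -
              Real.sqrt (((((N : ℝ) - 2) / 2) ^ 2) + μ (k₀ + 1 + k))))
            (‖p.1‖ * ‖p.2‖)| *
          ‖ψ (k₀ + 1 + k) (‖p.1‖⁻¹ • p.1)‖ * ‖ψ (k₀ + 1 + k) (‖p.2‖⁻¹ • p.2)‖)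
      (fun p =>
        ∑' k : ℕ,
          |sphBesselJ N (-(((N : ℝ) - 2) / 2 -
              Real.sqrt (((((N : ℝ) - 2) / 2) ^ 2) + μ (k₀ + 1 + k))))
            (‖p.1‖ * ‖p.2‖)| *
          ‖ψ (k₀ + 1 + k) (‖p.1‖⁻¹ • p.1)‖ * ‖ψ (k₀ + 1 + k) (‖p.2‖⁻¹ • p.2)‖)
      atTop (𝒦 ×ˢ 𝒦) := by
  set q : ℝ := ((N : ℝ) - 2) / 2
  set β : ℕ → ℝ := fun m => √(q ^ 2 + μ m)
  have hN' : (2 : ℝ) ≤ N := by exact_mod_cast hN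
  have hβ_growth : ∀ m, k₀ ≤ m → √c * (m : ℝ) ^ (2 / ((N : ℝ) - 1) / 2) ≤ β m := fun m hm =>
    sqrt_mul_rpow_half_le_sqrt_sq_add q hc.le (Nat.cast_nonneg m) (hweyl m hm)
  have hq_lt : ∀ k, q < β (k₀ + 1 + k) := fun k => by
    refine (lt_sqrt (by simp only [q]; linarith)).2 (lt_add_of_pos_right _ ?_)
    exact (mul_pos hc (rpow_pos_of_pos (by positivity) _)).trans_le (hweyl _ (by omega))
  obtain ⟨R, hR⟩ := isBounded_iff_forall_norm_le.1 h𝒦.isBounded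
  set M := max R 1 ^ 2
  have hM : 1 ≤ M := one_le_pow₀ (le_max_right _ _)
  have hsummable := summable_rpow_mul_rpow_div_Gamma (2 * δ₂) hM (sqrt_pos.2 hc)
    (div_pos (div_pos two_pos (by linarith)) two_pos) (eventually_atTop.2 ⟨k₀, hβ_growth⟩)
  rw [← summable_nat_add_iff (k₀ + 1)] at hsummable
  refine tendstoUniformlyOn_tsum_nat ((hsummable.mul_left (C₂ ^ 2 * exp ((M / 2) ^ 2))).congr
    fun k => by rw [add_comm k]) fun k p ⟨hx, hy⟩ => ?_
  have hr : ‖p.1‖ * ‖p.2‖ ≤ M := by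
    rw [show M = max R 1 * max R 1 from sq _]
    exact mul_le_mul ((hR _ hx).trans (le_max_left _ _)) ((hR _ hy).trans (le_max_left _ _))
      (norm_nonneg _) (by positivity)
  rw [neg_sub, norm_of_nonneg (by positivity)]
  exact abs_sphBesselJ_mul_norm_mul_norm_le hN (hq_lt k) (by positivity) hr hM
    (Nat.cast_nonneg _) (hψ _ _) (hψ _ _)

/-- **Uniform convergence on compacts of the tail of the kernel series**: assume a
Weyl-type lower bound `μ_k ≥ c k^{2/(N-1)}` for `k ≥ k₀` and sup-norm bounds
`‖ψ_k‖_∞ ≤ C₂ k^{δ₂}`. With `α_k = (N-2)/2 - √(((N-2)/2)² + μ_k)`, the series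
`Σ_{k>k₀} |j_{-α_k}(|x||y|)| |ψ_k(x/|x|)| |ψ_k(y/|y|)|`
converges uniformly for `x, y` in any compact set `𝒦 ⊂ ℝ^N`. -/
theorem kernel_tail_uniform_convergence (N : ℕ) (hN : 2 ≤ N)
    (μ : ℕ → ℝ) (hmono : Monotone μ)
    (c : ℝ) (hc : 0 < c) (k₀ : ℕ)
    (hweyl : ∀ k, k₀ ≤ k → c * (k : ℝ) ^ ((2 : ℝ) / ((N : ℝ) - 1)) ≤ μ k)
    (ψ : ℕ → EuclideanSpace ℝ (Fin N) → ℂ)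
    (C₂ δ₂ : ℝ) (hC₂ : 0 < C₂) (hδ₂ : 0 ≤ δ₂)
    (hψ : ∀ k θ, ‖ψ k θ‖ ≤ C₂ * (k : ℝ) ^ δ₂)
    (𝒦 : Set (EuclideanSpace ℝ (Fin N))) (h𝒦 : IsCompact 𝒦) :
    TendstoUniformlyOn
      (fun (n : ℕ) (p : EuclideanSpace ℝ (Fin N) × EuclideanSpace ℝ (Fin N)) =>
        ∑ k ∈ Finset.range n,
          |sphBesselJ N (-(((N : ℝ) - 2) / 2 -
              Real.sqrt (((((N : ℝ) - 2) / 2) ^ 2) + μ (k₀ + 1 + k))))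
            (‖p.1‖ * ‖p.2‖)| *
          ‖ψ (k₀ + 1 + k) (‖p.1‖⁻¹ • p.1)‖ * ‖ψ (k₀ + 1 + k) (‖p.2‖⁻¹ • p.2)‖)
      (fun p =>
        ∑' k : ℕ,
          |sphBesselJ N (-(((N : ℝ) - 2) / 2 -
              Real.sqrt (((((N : ℝ) - 2) / 2) ^ 2) + μ (k₀ + 1 + k))))
            (‖p.1‖ * ‖p.2‖)| *
          ‖ψ (k₀ + 1 + k) (‖p.1‖⁻¹ • p.1)‖ * ‖ψ (k₀ + 1 + k) (‖p.2‖⁻¹ • p.2)‖)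
      atTop (𝒦 ×ˢ 𝒦) :=
  kernel_tail_uniform_convergence_general N hN μ c hc k₀ hweyl ψ C₂ δ₂ hψ 𝒦 h𝒦
end

section
/- Let α₁ > 0 and suppose K : ℝ³ × ℝ³ → ℂ satisfies |K(x,y)| ≤ C(1 + (|x||y|)^{−α₁}) for all x,y. Then the operator (T_t f)(x) = t^{−3/2} ∫_{ℝ³} K(x/√(2t), y/√(2t)) f(y) dy satisfies, for all t > 0 and f with (1 + |y|^{−α₁})|f| integrable: (|x|^{α₁}/(1 + |x|^{α₁})) |T_t f(x)| ≤ C' (1 + t^{α₁}) t^{−3/2} ∫_{ℝ³} ((1 + |y|^{α₁})/|y|^{α₁}) |f(y)| dy, for a.e. x ∈ ℝ³, with C' depending only on C and α₁. -/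
open MeasureTheory Real

set_option maxHeartbeats 1600000 in
/-- **Weighted `L¹ → L^∞` bound for kernels with homogeneous singularity**: let
`α₁ > 0` and `|K(x,y)| ≤ C(1 + (|x||y|)^{-α₁})`. Then the operator
`(T_t f)(x) = t^{-3/2} ∫ K(x/√(2t), y/√(2t)) f(y) dy` satisfies, for `t > 0` and
`f` with `(1+|y|^{-α₁})|f|` integrable,
`(|x|^{α₁}/(1+|x|^{α₁})) |T_t f(x)| ≤ C'(1+t^{α₁}) t^{-3/2} ∫ ((1+|y|^{α₁})/|y|^{α₁}) |f(y)| dy`,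
with `C'` depending only on `C` and `α₁`. -/
theorem weighted_dispersive_bound (α₁ : ℝ) (hα₁ : 0 < α₁) (C : ℝ) (hC : 0 < C) :
    ∃ C' : ℝ, 0 < C' ∧
      ∀ K : EuclideanSpace ℝ (Fin 3) → EuclideanSpace ℝ (Fin 3) → ℂ,
        (∀ x y, ‖K x y‖ ≤ C * (1 + (‖x‖ * ‖y‖) ^ (-α₁))) →
        ∀ t : ℝ, 0 < t →
        ∀ f : EuclideanSpace ℝ (Fin 3) → ℂ,
          Integrable (fun y => (1 + ‖y‖ ^ (-α₁)) * ‖f y‖) →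
          ∀ x : EuclideanSpace ℝ (Fin 3),
            ‖x‖ ^ α₁ / (1 + ‖x‖ ^ α₁) *
                ‖((t ^ (-(3 : ℝ) / 2) : ℝ) : ℂ) *
                  ∫ y, K ((Real.sqrt (2 * t))⁻¹ • x) ((Real.sqrt (2 * t))⁻¹ • y) * f y‖
              ≤ C' * (1 + t ^ α₁) * t ^ (-(3 : ℝ) / 2) *
                  ∫ y, (1 + ‖y‖ ^ α₁) / ‖y‖ ^ α₁ * ‖f y‖ := by
  refine ⟨C * (1 + (2 : ℝ) ^ α₁), by positivity, ?_⟩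
  intro K hK t ht f hf x
  set s := Real.sqrt (2 * t) with hs
  have hs0 : 0 < s := Real.sqrt_pos.mpr (by linarith)
  have hss : s * s = 2 * t := Real.mul_self_sqrt (by linarith)
  have hae : ∀ᵐ (y : EuclideanSpace ℝ (Fin 3)) ∂volume, y ≠ 0 := by
    have h0 : volume ({(0 : EuclideanSpace ℝ (Fin 3))} : Set (EuclideanSpace ℝ (Fin 3))) = 0 :=
      measure_singleton 0
    rw [ae_iff]
    simp only [ne_eq, not_not]; exact h0
  have heq : (fun y : EuclideanSpace ℝ (Fin 3) => (1 + ‖y‖ ^ (-α₁)) * ‖f y‖)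
      =ᵐ[volume] (fun y => (1 + ‖y‖ ^ α₁) / ‖y‖ ^ α₁ * ‖f y‖) := by
    filter_upwards [hae] with y hy
    have hv : 0 < ‖y‖ := norm_pos_iff.mpr hy
    have hvp : 0 < ‖y‖ ^ α₁ := Real.rpow_pos_of_pos hv _
    rw [Real.rpow_neg hv.le, add_div, div_self hvp.ne', one_div]
    ring
  have hRint : Integrable (fun y : EuclideanSpace ℝ (Fin 3) =>
      (1 + ‖y‖ ^ α₁) / ‖y‖ ^ α₁ * ‖f y‖) := hf.congr heq
  have hInonneg : 0 ≤ ∫ y : EuclideanSpace ℝ (Fin 3), (1 + ‖y‖ ^ α₁) / ‖y‖ ^ α₁ * ‖f y‖ :=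
    integral_nonneg fun y => by positivity
  have hRHSnonneg : 0 ≤ C * (1 + (2 : ℝ) ^ α₁) * (1 + t ^ α₁) * t ^ (-(3 : ℝ) / 2) *
      ∫ y : EuclideanSpace ℝ (Fin 3), (1 + ‖y‖ ^ α₁) / ‖y‖ ^ α₁ * ‖f y‖ :=
    mul_nonneg (by positivity) hInonneg
  rcases eq_or_ne x 0 with rfl | hxne
  · simpa [Real.zero_rpow hα₁.ne'] using hRHSnonneg
  have hx : 0 < ‖x‖ := norm_pos_iff.mpr hxne
  have hxp : 0 < ‖x‖ ^ α₁ := Real.rpow_pos_of_pos hx _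
  set w : ℝ := ‖x‖ ^ α₁ / (1 + ‖x‖ ^ α₁) with hw
  have hw0 : 0 ≤ w := by positivity
  have hw1 : w ≤ 1 := by
    rw [hw, div_le_one (by positivity)]; linarith
  by_cases hF : Integrable (fun y : EuclideanSpace ℝ (Fin 3) => K (s⁻¹ • x) (s⁻¹ • y) * f y)
  · have hnorm : ‖((t ^ (-(3 : ℝ) / 2) : ℝ) : ℂ)‖ = t ^ (-(3 : ℝ) / 2) := by
      rw [Complex.norm_real, Real.norm_eq_abs, abs_of_nonneg (Real.rpow_nonneg ht.le _)]
    have key : ∀ y : EuclideanSpace ℝ (Fin 3), y ≠ 0 →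
        w * ‖K (s⁻¹ • x) (s⁻¹ • y) * f y‖ ≤
          C * (1 + (2 : ℝ) ^ α₁) * (1 + t ^ α₁) * ((1 + ‖y‖ ^ α₁) / ‖y‖ ^ α₁ * ‖f y‖) := by
      intro y hy
      have hv : 0 < ‖y‖ := norm_pos_iff.mpr hy
      have hvp : 0 < ‖y‖ ^ α₁ := Real.rpow_pos_of_pos hv _
      have hnx : ‖s⁻¹ • x‖ = s⁻¹ * ‖x‖ := by
        rw [norm_smul, Real.norm_eq_abs, abs_of_pos (inv_pos.mpr hs0)]
      have hny : ‖s⁻¹ • y‖ = s⁻¹ * ‖y‖ := by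
        rw [norm_smul, Real.norm_eq_abs, abs_of_pos (inv_pos.mpr hs0)]
      have hprod : ‖s⁻¹ • x‖ * ‖s⁻¹ • y‖ = (s * s)⁻¹ * (‖x‖ * ‖y‖) := by
        rw [hnx, hny]; ring
      have h2 : (‖s⁻¹ • x‖ * ‖s⁻¹ • y‖) ^ (-α₁) =
          (2 * t) ^ α₁ * (‖x‖ ^ (-α₁) * ‖y‖ ^ (-α₁)) := by
        rw [hprod, Real.mul_rpow (by positivity) (by positivity),
          Real.mul_rpow hx.le hv.le, Real.inv_rpow (by positivity),
          Real.rpow_neg (by positivity) α₁, inv_inv, hss]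
      have h3 : w * ‖x‖ ^ (-α₁) ≤ 1 := by
        rw [hw, Real.rpow_neg hx.le]
        rw [div_mul_eq_mul_div, mul_inv_cancel₀ hxp.ne', div_le_one (by positivity)]
        linarith
      have h4 : (1 + ‖y‖ ^ α₁) / ‖y‖ ^ α₁ = 1 + ‖y‖ ^ (-α₁) := by
        rw [Real.rpow_neg hv.le, add_div, div_self hvp.ne', one_div]
        ring
      have h2t : (2 * t) ^ α₁ = (2 : ℝ) ^ α₁ * t ^ α₁ :=
        Real.mul_rpow (by norm_num) ht.le
      have hKb := hK (s⁻¹ • x) (s⁻¹ • y)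
      rw [norm_mul, h4]
      have step1 : w * (‖K (s⁻¹ • x) (s⁻¹ • y)‖ * ‖f y‖) ≤
          w * (C * (1 + (‖s⁻¹ • x‖ * ‖s⁻¹ • y‖) ^ (-α₁)) * ‖f y‖) := by
        gcongr
      refine step1.trans ?_
      rw [h2, h2t]
      have hA : (0 : ℝ) ≤ (2 : ℝ) ^ α₁ := by positivity
      have hB : (0 : ℝ) ≤ t ^ α₁ := by positivity
      have hr : (0 : ℝ) ≤ ‖y‖ ^ (-α₁) := by positivity
      have hfy : (0 : ℝ) ≤ ‖f y‖ := norm_nonneg _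
      have expand : w * (C * (1 + (2:ℝ) ^ α₁ * t ^ α₁ * (‖x‖ ^ (-α₁) * ‖y‖ ^ (-α₁))) * ‖f y‖)
          = C * ‖f y‖ * (w + (2:ℝ) ^ α₁ * t ^ α₁ * (w * ‖x‖ ^ (-α₁)) * ‖y‖ ^ (-α₁)) := by
        ring
      rw [expand]
      have step2 : C * ‖f y‖ * (w + (2:ℝ) ^ α₁ * t ^ α₁ * (w * ‖x‖ ^ (-α₁)) * ‖y‖ ^ (-α₁))
          ≤ C * ‖f y‖ * (1 + (2:ℝ) ^ α₁ * t ^ α₁ * 1 * ‖y‖ ^ (-α₁)) := by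
        have hwx : 0 ≤ w * ‖x‖ ^ (-α₁) := by positivity
        gcongr
      refine step2.trans ?_
      have inner : 1 + (2:ℝ) ^ α₁ * t ^ α₁ * 1 * ‖y‖ ^ (-α₁) ≤
          (1 + (2:ℝ) ^ α₁) * (1 + t ^ α₁) * (1 + ‖y‖ ^ (-α₁)) := by
        nlinarith [mul_nonneg hA hB, mul_nonneg hA hr, mul_nonneg hB hr,
          mul_nonneg (mul_nonneg hA hB) hr]
      calc C * ‖f y‖ * (1 + (2:ℝ) ^ α₁ * t ^ α₁ * 1 * ‖y‖ ^ (-α₁))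
          ≤ C * ‖f y‖ * ((1 + (2:ℝ) ^ α₁) * (1 + t ^ α₁) * (1 + ‖y‖ ^ (-α₁))) :=
            mul_le_mul_of_nonneg_left inner (by positivity)
        _ = C * (1 + (2:ℝ) ^ α₁) * (1 + t ^ α₁) * ((1 + ‖y‖ ^ (-α₁)) * ‖f y‖) := by ring
    calc w * ‖((t ^ (-(3 : ℝ) / 2) : ℝ) : ℂ) *
          ∫ y, K (s⁻¹ • x) (s⁻¹ • y) * f y‖
        = t ^ (-(3 : ℝ) / 2) * (w * ‖∫ y, K (s⁻¹ • x) (s⁻¹ • y) * f y‖) := by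
          rw [norm_mul, hnorm]; ring
      _ ≤ t ^ (-(3 : ℝ) / 2) * (w * ∫ y, ‖K (s⁻¹ • x) (s⁻¹ • y) * f y‖) := by
          exact mul_le_mul_of_nonneg_left
            (mul_le_mul_of_nonneg_left (norm_integral_le_integral_norm _) hw0)
            (Real.rpow_nonneg ht.le _)
      _ = t ^ (-(3 : ℝ) / 2) * ∫ y, w * ‖K (s⁻¹ • x) (s⁻¹ • y) * f y‖ := by
          rw [integral_const_mul]
      _ ≤ t ^ (-(3 : ℝ) / 2) * ∫ y, C * (1 + (2:ℝ) ^ α₁) * (1 + t ^ α₁) *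
            ((1 + ‖y‖ ^ α₁) / ‖y‖ ^ α₁ * ‖f y‖) := by
          refine mul_le_mul_of_nonneg_left ?_ (Real.rpow_nonneg ht.le _)
          refine integral_mono_ae (hF.norm.const_mul w) (hRint.const_mul _) ?_
          filter_upwards [hae] with y hy
          exact key y hy
      _ = C * (1 + (2:ℝ) ^ α₁) * (1 + t ^ α₁) * t ^ (-(3 : ℝ) / 2) *
            ∫ y, (1 + ‖y‖ ^ α₁) / ‖y‖ ^ α₁ * ‖f y‖ := by
          rw [integral_const_mul]; ring
  · rw [integral_undef hF]
    simpa using hRHSnonneg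
end
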